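/- (Shi) Let W_a be the affine Weyl group of an irreducible root system Φ acting on V = Q∨ ⊗ ℝ, and for w ∈ W_a and α ∈ Φ⁺ let k(α, w) be the integer with k(α, w) < ⟨α, v⟩ < k(α, w)+1 for v in the alcove w(A). Given integers k_α for each α ∈ Φ⁺, there exists w ∈ W_a with k(α, w) = k_α for all α if and only if k_α + k_β ≤ k_{α+β} ≤ k_α + k_β + 1 whenever α, β, α+β ∈ Φ⁺. -/

import Mathlib

open RealInnerProductSpace
open scoped Classical

variable {V : Type*} [NormedAddCommGroup V] [InnerProductSpace ℝ V] [FiniteDimensional ℝ V]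

/-- A finite crystallographic root system in the real inner product space `V`. -/
structure IsRootSystem (Φ : Set V) : Prop where
  finite : Φ.Finite
  nonzero : (0 : V) ∉ Φ
  spanning : Submodule.span ℝ Φ = ⊤
  reflect_mem : ∀ α ∈ Φ, ∀ β ∈ Φ, β - (2 * ⟪β, α⟫ / ⟪α, α⟫) • α ∈ Φ
  crystallographic : ∀ α ∈ Φ, ∀ β ∈ Φ, ∃ n : ℤ, 2 * ⟪β, α⟫ / ⟪α, α⟫ = (n : ℝ)

/-- `Pos` is a system of positive roots for `Φ`: the roots on the positive side of a
generic linear functional. -/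
def IsPositiveSystem (Φ Pos : Set V) : Prop :=
  ∃ f : V →ₗ[ℝ] ℝ, (∀ α ∈ Φ, f α ≠ 0) ∧ Pos = {α ∈ Φ | 0 < f α}

/-- Irreducibility of a root system: no splitting into two nonempty orthogonal parts. -/
def IsIrreducibleRootSystem (Φ : Set V) : Prop :=
  Φ.Nonempty ∧ ∀ Φ₁ Φ₂ : Set V, Φ = Φ₁ ∪ Φ₂ →
    (∀ α ∈ Φ₁, ∀ β ∈ Φ₂, ⟪α, β⟫ = 0) → Φ₁ = ∅ ∨ Φ₂ = ∅

/-- A simple root: a positive root that is not the sum of two positive roots. -/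
def IsSimpleRoot (Pos : Set V) (α : V) : Prop :=
  α ∈ Pos ∧ ∀ β ∈ Pos, ∀ γ ∈ Pos, α ≠ β + γ

/-- An upper order ideal of the positive roots. -/
def IsUpperIdeal (Pos I : Set V) : Prop :=
  I ⊆ Pos ∧ ∀ α ∈ I, ∀ β ∈ Pos, α + β ∈ Pos → α + β ∈ I

/-- `γ` is a sum of `k` elements of `S`. -/
def IsSumOf (S : Set V) (k : ℕ) (γ : V) : Prop :=
  ∃ f : Fin k → V, (∀ i, f i ∈ S) ∧ ∑ i, f i = γ

/-- The standard partial order on roots: `α ≼ γ` iff `γ - α` is a (possibly empty)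
sum of positive roots. -/
def RootLE (Pos : Set V) (α γ : V) : Prop := ∃ k, IsSumOf Pos k (γ - α)

/-- The set of minimal roots of an ideal `I`. -/
def minimalRoots (Pos I : Set V) : Set V :=
  {α | α ∈ I ∧ ∀ β ∈ I, RootLE Pos β α → β = α}

/-- `γ_{I,+}`: the maximal number of summands in a decomposition of `γ` as a sum of
elements of `I` (with junk value `0` if no decomposition exists). -/
noncomputable def aPlus (I : Set V) (γ : V) : ℕ := sSup {k | IsSumOf I k γ}

/-- `γ_{I,-}`: the minimal `k` such that `γ` is a sum of `k + 1` elements of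
`Pos \ I`. -/
noncomputable def aMinus (Pos I : Set V) (γ : V) : ℕ := sInf {k | IsSumOf (Pos \ I) (k + 1) γ}

/-- The height of a positive root: the number of summands when written as a sum of
simple roots. -/
noncomputable def rootHeight (Pos : Set V) (γ : V) : ℕ :=
  sSup {k | IsSumOf {α | IsSimpleRoot Pos α} k γ}

/-- The reflection in the hyperplane orthogonal to `α`. -/
noncomputable def rootReflection (α : V) : V ≃ₗᵢ[ℝ] V :=
  Submodule.reflection ((ℝ ∙ α)ᗮ)

/-- The Weyl group: the subgroup of linear isometries generated by root reflections. -/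
noncomputable def WeylGroup (Φ : Set V) : Subgroup (V ≃ₗᵢ[ℝ] V) :=
  Subgroup.closure {g | ∃ α ∈ Φ, g = rootReflection α}

/-- The coroot `α∨ = 2α/⟨α,α⟩` of a root `α`. -/
noncomputable def coroot (α : V) : V := (2 / ⟪α, α⟫) • α

/-- The coroot lattice `Q∨`. -/
noncomputable def corootLattice (Φ : Set V) : AddSubgroup V :=
  AddSubgroup.closure {v | ∃ α ∈ Φ, v = coroot α}

/-- A root reflection viewed as an affine transformation. -/
noncomputable def rootReflectionAff (α : V) : V ≃ᵃ[ℝ] V :=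
  (rootReflection α).toLinearEquiv.toAffineEquiv

/-- The affine Weyl group `W_a ≅ W ⋉ Q∨`: generated by the root reflections together
with the translations by elements of the coroot lattice. -/
noncomputable def affineWeylGroup (Φ : Set V) : Subgroup (V ≃ᵃ[ℝ] V) :=
  Subgroup.closure
    ({g | ∃ α ∈ Φ, g = rootReflectionAff α} ∪
     {g | ∃ lam ∈ corootLattice Φ, g = AffineEquiv.constVAdd ℝ V lam})

/-- The fundamental alcove `A` (with respect to the highest root `θ`). -/
def fundamentalAlcove (Pos : Set V) (θ : V) : Set V :=
  {v | (∀ α, IsSimpleRoot Pos α → 0 < ⟪α, v⟫) ∧ ⟪θ, v⟫ < 1}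

/-- `kk α = k(α, w)` for every positive root `α`: the alcove `w(A)` lies strictly
between the hyperplanes `H_{α, kk α}` and `H_{α, kk α + 1}`. -/
def IsAlcoveK (Pos : Set V) (θ : V) (w : V ≃ᵃ[ℝ] V) (kk : V → ℤ) : Prop :=
  ∀ α ∈ Pos, ∀ v ∈ fundamentalAlcove Pos θ,
    (kk α : ℝ) < ⟪α, w v⟫ ∧ ⟪α, w v⟫ < kk α + 1

/-- `supp w = I` for an ideal `I ⊆ Φ⁺`: `w` is dominant (no negative root occurs in
the support, i.e. `k(α, w) ≥ 0` for all positive `α`) and a positive root `α` lies in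
the support (i.e. `k(α, w) ≥ 1`) exactly when `α ∈ I`. -/
def SuppIs (Pos : Set V) (θ : V) (w : V ≃ᵃ[ℝ] V) (I : Set V) : Prop :=
  ∃ kk : V → ℤ, IsAlcoveK Pos θ w kk ∧ ∀ α ∈ Pos, 0 ≤ kk α ∧ (α ∈ I ↔ 1 ≤ kk α)

/-- The sign type `ST(I)`: the set of elements of the affine Weyl group whose support
is `I`. -/
noncomputable def signType (Φ Pos : Set V) (θ : V) (I : Set V) : Set (V ≃ᵃ[ℝ] V) :=
  {w | w ∈ affineWeylGroup Φ ∧ SuppIs Pos θ w I}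

/-- The length of `w ∈ W_a`, computed as `∑_{α ∈ Φ⁺} |k(α, w)|`. -/
noncomputable def affLen (Pos : Set V) (θ : V) (w : V ≃ᵃ[ℝ] V) : ℕ :=
  if h : ∃ kk : V → ℤ, IsAlcoveK Pos θ w kk then
    ∑ᶠ α ∈ Pos, (h.choose α).natAbs
  else 0

/-- The simple affine reflections `S = {s₀, s₁, …, s_n}` of `W_a`: the reflections in
the simple roots together with the affine reflection `s₀ = s_θ τ_{-θ∨}` in `H_{θ,1}`. -/
noncomputable def simpleAffineReflections (Pos : Set V) (θ : V) : Set (V ≃ᵃ[ℝ] V) :=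
  {s | (∃ α, IsSimpleRoot Pos α ∧ s = rootReflectionAff α) ∨
    s = (rootReflectionAff θ).trans (AffineEquiv.constVAdd ℝ V (coroot θ))}

/-- The translation part `λ` of `w = x τ_λ` (so that `w v = x (v + λ)`). -/
noncomputable def translationPart (w : V ≃ᵃ[ℝ] V) : V := w.linear.symm (w 0)

/-!
Necessity: at a point `v` of `A`, the numbers `⟪α, w v⟫`, `⟪β, w v⟫` and their sum `⟪α + β, w v⟫`
lie in `(k_α, k_α + 1)`, `(k_β, k_β + 1)` and `(k_{α+β}, k_{α+β} + 1)`.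

Sufficiency, by induction on `∑ |k_α|`: extending `k` to negative roots by `k_{-α} = -k_α - 1`,
the inequalities hold for all roots, hence are preserved when `k` is replaced by the `k`-vector of
`s w`, `s` an affine reflection. If `k_ρ < 0` for a simple root `ρ`, take `s = s_ρ`: it permutes
the positive roots other than `ρ` and `2ρ`, and lowers `|k|` there. Otherwise the inequalities force
`0 ≤ k_α ≤ k_θ`; if `k_θ = 0` then `w = 1`, and if `k_θ > 0` take `s` the reflection in `H_{θ,1}`,
which lowers `|k_θ|` and, as `⟪α, θ∨⟫ ∈ {0, 1}` for `α ≠ θ`, permutes the other `|k_α|`.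
-/

section

omit [FiniteDimensional ℝ V]

theorem Finset.sum_lt_sum_of_le_comp_involutive {ι M : Type*} [AddCommMonoid M] [PartialOrder M]
    [IsOrderedCancelAddMonoid M] {s : Finset ι} {g h : ι → M} (σ : ι → ι)
    (hσ : ∀ i ∈ s, σ i ∈ s) (hσσ : ∀ i ∈ s, σ (σ i) = i) (hle : ∀ i ∈ s, g i ≤ h (σ i))
    (hlt : ∃ i ∈ s, g i < h (σ i)) : ∑ i ∈ s, g i < ∑ i ∈ s, h i :=
  (Finset.sum_lt_sum hle hlt).trans_eq (Finset.sum_nbij' σ σ hσ hσ hσσ hσσ fun _ _ => rfl)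

theorem inner_coroot (α β : V) : ⟪β, coroot α⟫ = 2 * ⟪β, α⟫ / ⟪α, α⟫ := by
  rw [coroot, real_inner_smul_right]; ring

theorem rootReflection_apply (α β : V) : rootReflection α β = β - ⟪β, coroot α⟫ • α := by
  rw [rootReflection, Submodule.reflection_orthogonal_apply,
    Submodule.reflection_singleton_apply, inner_coroot]
  simp only [RCLike.ofReal_real_eq_id, id]
  rw [← real_inner_self_eq_norm_sq, real_inner_comm, neg_sub, ← Nat.cast_smul_eq_nsmul ℝ,
    smul_smul]
  ring_nf

theorem rootReflection_rootReflection (α β : V) : rootReflection α (rootReflection α β) = β :=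
  Submodule.reflection_reflection _ _

theorem rootReflection_self (α : V) : rootReflection α α = -α :=
  Submodule.reflection_orthogonalComplement_singleton_eq_neg α

theorem inner_rootReflection_left (α x y : V) :
    ⟪rootReflection α x, y⟫ = ⟪x, rootReflection α y⟫ := by
  rw [← (rootReflection α).inner_map_map x, rootReflection_rootReflection]

theorem inner_coroot_rootReflection (α β : V) :
    ⟪rootReflection α β, coroot α⟫ = -⟪β, coroot α⟫ := by
  rw [inner_rootReflection_left, coroot, map_smul, rootReflection_self, smul_neg, inner_neg_right]

namespace IsRootSystem

variable {Φ : Set V} (hΦ : IsRootSystem Φ)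
include hΦ

theorem ne_zero {α : V} (hα : α ∈ Φ) : α ≠ 0 := fun h => hΦ.nonzero (h ▸ hα)

theorem inner_self_pos {α : V} (hα : α ∈ Φ) : 0 < ⟪α, α⟫ :=
  real_inner_self_pos.mpr (hΦ.ne_zero hα)

theorem rootReflection_mem {α β : V} (hα : α ∈ Φ) (hβ : β ∈ Φ) : rootReflection α β ∈ Φ := by
  simpa only [rootReflection_apply, inner_coroot] using hΦ.reflect_mem α hα β hβ

theorem neg_mem {α : V} (hα : α ∈ Φ) : -α ∈ Φ := by
  simpa only [rootReflection_self] using hΦ.rootReflection_mem hα hα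

theorem exists_int_inner_coroot {α β : V} (hα : α ∈ Φ) (hβ : β ∈ Φ) :
    ∃ n : ℤ, ⟪β, coroot α⟫ = n := by
  simpa only [inner_coroot] using hΦ.crystallographic α hα β hβ

/-- If `⟪α, β⟫ < 0`, one of the Cartan integers `⟪α, β∨⟫`, `⟪β, α∨⟫` is `-1` (then a reflection
produces `α + β`): were both `≤ -2`, we would get `‖α + β‖² ≤ 0`. -/
theorem add_mem_of_inner_neg {α β : V} (hα : α ∈ Φ) (hβ : β ∈ Φ) (hαβ : ⟪α, β⟫ < 0)
    (hne : α + β ≠ 0) : α + β ∈ Φ := by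
  obtain ⟨m, hm⟩ := hΦ.exists_int_inner_coroot hβ hα
  obtain ⟨n, hn⟩ := hΦ.exists_int_inner_coroot hα hβ
  have ha := hΦ.inner_self_pos hα
  have hb := hΦ.inner_self_pos hβ
  rw [inner_coroot] at hm hn
  rw [real_inner_comm] at hn
  have hm' : 2 * ⟪α, β⟫ = m * ⟪β, β⟫ := by rw [← hm]; field_simp
  have hn' : 2 * ⟪α, β⟫ = n * ⟪α, α⟫ := by rw [← hn]; field_simp
  have hm0 : m < 0 := by
    have : (m : ℝ) < 0 := by nlinarith
    exact_mod_cast this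
  have hn0 : n < 0 := by
    have : (n : ℝ) < 0 := by nlinarith
    exact_mod_cast this
  by_cases hm1 : m = -1
  · have := hΦ.rootReflection_mem hβ hα
    rwa [rootReflection_apply, inner_coroot, hm, hm1, Int.cast_neg, Int.cast_one, neg_smul,
      one_smul, sub_neg_eq_add] at this
  by_cases hn1 : n = -1
  · have := hΦ.rootReflection_mem hα hβ
    rwa [rootReflection_apply, inner_coroot, real_inner_comm, hn, hn1, Int.cast_neg,
      Int.cast_one, neg_smul, one_smul, sub_neg_eq_add, add_comm] at this
  have hm2 : (m : ℝ) ≤ -2 := by exact_mod_cast (show m ≤ -2 by omega)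
  have hn2 : (n : ℝ) ≤ -2 := by exact_mod_cast (show n ≤ -2 by omega)
  refine absurd (real_inner_self_nonpos.mp ?_) hne
  rw [real_inner_add_add_self]
  nlinarith

theorem le_two_of_nsmul_mem {ρ : V} (hρ : ρ ∈ Φ) {j : ℕ} (hj : 1 ≤ j) (hjρ : j • ρ ∈ Φ) :
    j ≤ 2 := by
  obtain ⟨n, hn⟩ := hΦ.exists_int_inner_coroot hjρ hρ
  have hρρ := hΦ.inner_self_pos hρ
  have hj' : (0 : ℝ) < j := by exact_mod_cast hj
  rw [inner_coroot, ← Nat.cast_smul_eq_nsmul ℝ, real_inner_smul_left,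
    real_inner_smul_right] at hn
  have h2 : (2 : ℝ) = j * n := by
    field_simp at hn
    nlinarith
  have h2' : (2 : ℤ) = j * n := by exact_mod_cast h2
  exact_mod_cast Int.le_of_dvd two_pos ⟨n, h2'⟩

end IsRootSystem

structure IsPositiveSystemWith (Φ Pos : Set V) (f : V →ₗ[ℝ] ℝ) : Prop where
  isRootSystem : IsRootSystem Φ
  apply_ne_zero : ∀ α ∈ Φ, f α ≠ 0
  pos_eq : Pos = {α ∈ Φ | 0 < f α}

def IsHighestRoot (Φ Pos : Set V) (θ : V) : Prop :=
  θ ∈ Pos ∧ ∀ α ∈ Φ, RootLE Pos α θ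

noncomputable def posRep (Pos : Set V) (x : V) : V := if x ∈ Pos then x else -x

theorem LinearMap.apply_le_of_rootLE {Pos : Set V} {g : V →ₗ[ℝ] ℝ} (hg : ∀ β ∈ Pos, 0 ≤ g β)
    {α γ : V} (h : RootLE Pos α γ) : g α ≤ g γ := by
  obtain ⟨k, b, hb, hsum⟩ := h
  have : 0 ≤ g (γ - α) := by
    rw [← hsum, map_sum]
    exact Finset.sum_nonneg fun i _ => hg _ (hb i)
  linarith [map_sub g γ α]

namespace IsPositiveSystemWith

variable {Φ Pos : Set V} {f : V →ₗ[ℝ] ℝ} (P : IsPositiveSystemWith Φ Pos f) {θ : V}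
include P

theorem mem_iff {α : V} : α ∈ Pos ↔ α ∈ Φ ∧ 0 < f α := by rw [P.pos_eq]; rfl

theorem subset : Pos ⊆ Φ := fun _ h => (P.mem_iff.mp h).1

theorem apply_pos {α : V} (hα : α ∈ Pos) : 0 < f α := (P.mem_iff.mp hα).2

theorem finite : Pos.Finite := P.isRootSystem.finite.subset P.subset

theorem neg_not_mem {α : V} (hα : α ∈ Pos) : -α ∉ Pos := fun h => by
  linarith [P.apply_pos hα, P.apply_pos h, map_neg f α]

theorem not_mem_of_neg_mem {α : V} (hα : -α ∈ Pos) : α ∉ Pos := by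
  simpa using P.neg_not_mem hα

theorem mem_or_neg_mem {α : V} (hα : α ∈ Φ) : α ∈ Pos ∨ -α ∈ Pos := by
  rcases (P.apply_ne_zero α hα).lt_or_gt with h | h
  · exact .inr (P.mem_iff.mpr ⟨P.isRootSystem.neg_mem hα, by simpa using h⟩)
  · exact .inl (P.mem_iff.mpr ⟨hα, h⟩)

theorem add_mem {α β : V} (hα : α ∈ Pos) (hβ : β ∈ Pos) (hαβ : α + β ∈ Φ) : α + β ∈ Pos :=
  P.mem_iff.mpr ⟨hαβ, by rw [map_add]; linarith [P.apply_pos hα, P.apply_pos hβ]⟩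

theorem add_ne_zero {α β : V} (hα : α ∈ Pos) (hβ : β ∈ Pos) : α + β ≠ 0 := fun h => by
  linarith [congrArg f h, map_add f α β, map_zero f, P.apply_pos hα, P.apply_pos hβ]

theorem posRep_mem {x : V} (hx : x ∈ Φ) : posRep Pos x ∈ Pos := by
  unfold posRep
  split_ifs with h
  exacts [h, (P.mem_or_neg_mem hx).resolve_left h]

theorem posRep_neg {x : V} (hx : x ∈ Φ) : posRep Pos (-x) = posRep Pos x := by
  rcases P.mem_or_neg_mem hx with h | h
  · simp [posRep, h, P.neg_not_mem h]
  · simp [posRep, h, P.not_mem_of_neg_mem h]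

theorem posRep_rootReflection_posRep_rootReflection (ρ : V) {β : V} (hβ : β ∈ Pos) :
    posRep Pos (rootReflection ρ (posRep Pos (rootReflection ρ β))) = β := by
  have hβ' : posRep Pos β = β := if_pos hβ
  by_cases h : rootReflection ρ β ∈ Pos
  · rw [show posRep Pos (rootReflection ρ β) = _ from if_pos h, rootReflection_rootReflection, hβ']
  · rw [show posRep Pos (rootReflection ρ β) = _ from if_neg h, map_neg,
      rootReflection_rootReflection, P.posRep_neg (P.subset hβ), hβ']

theorem induction_on_simple {p : V → Prop} (simple : ∀ α, IsSimpleRoot Pos α → p α)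
    (add : ∀ β ∈ Pos, ∀ γ ∈ Pos, β + γ ∈ Pos → p β → p γ → p (β + γ)) {α : V} (hα : α ∈ Pos) :
    p α := by
  refine (P.finite.wellFoundedOn (r := f ⁻¹'o (· < ·))).induction hα fun α hα ih => ?_
  by_cases hs : IsSimpleRoot Pos α
  · exact simple α hs
  obtain ⟨β, hβ, γ, hγ, rfl⟩ : ∃ β ∈ Pos, ∃ γ ∈ Pos, α = β + γ := by
    simpa [IsSimpleRoot, hα] using hs
  have hfβγ := map_add f β γ
  exact add β hβ γ hγ hα (ih β hβ (show f β < f (β + γ) by linarith [P.apply_pos hγ]))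
    (ih γ hγ (show f γ < f (β + γ) by linarith [P.apply_pos hβ]))

theorem sub_mem_of_inner_pos {ρ β : V} (hρ : IsSimpleRoot Pos ρ) (hβ : β ∈ Pos) (hne : β ≠ ρ)
    (hβρ : 0 < ⟪β, ρ⟫) : β - ρ ∈ Pos := by
  have hmem : β + -ρ ∈ Φ :=
    P.isRootSystem.add_mem_of_inner_neg (P.subset hβ) (P.isRootSystem.neg_mem (P.subset hρ.1))
      (by simpa using hβρ) (by rwa [← sub_eq_add_neg, sub_ne_zero])
  rw [← sub_eq_add_neg] at hmem
  refine (P.mem_or_neg_mem hmem).resolve_right fun h => hρ.2 β hβ _ (by simpa using h) ?_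
  abel

/-- Walking down the `ρ`-string: if `β + γ = n • ρ`, one of `β`, `γ` has positive inner product
with `ρ`, and subtracting `ρ` from it keeps it positive unless it equals `ρ`. -/
theorem exists_eq_nsmul_of_add_eq_nsmul {ρ : V} (hρ : IsSimpleRoot Pos ρ) (n : ℕ) :
    ∀ {β γ : V}, β ∈ Pos → γ ∈ Pos → β + γ = n • ρ → ∃ j : ℕ, β = j • ρ := by
  induction n using Nat.strong_induction_on with
  | _ n ih =>
    intro β γ hβ hγ hsum
    have hfβ := P.apply_pos hβ
    have hfγ := P.apply_pos hγ
    obtain ⟨n, rfl⟩ : ∃ m, n = m + 1 := Nat.exists_eq_add_one.mpr <| Nat.pos_of_ne_zero fun h => by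
      have := congrArg f hsum
      simp only [map_add, h, zero_smul, map_zero] at this
      linarith
    have hinner : ⟪β, ρ⟫ + ⟪γ, ρ⟫ = (n + 1 : ℕ) * ⟪ρ, ρ⟫ := by
      rw [← inner_add_left, hsum, ← Nat.cast_smul_eq_nsmul ℝ, real_inner_smul_left]
    have hρρ := P.isRootSystem.inner_self_pos (P.subset hρ.1)
    by_cases hβρ : 0 < ⟪β, ρ⟫
    · by_cases hne : β = ρ
      · exact ⟨1, by rw [hne, one_smul]⟩
      obtain ⟨j, hj⟩ := ih n n.lt_succ_self (P.sub_mem_of_inner_pos hρ hβ hne hβρ) hγ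
        (by rw [sub_add_eq_add_sub, hsum, succ_nsmul, add_sub_cancel_right])
      exact ⟨j + 1, by rw [succ_nsmul, ← hj, sub_add_cancel]⟩
    · have hγρ : 0 < ⟪γ, ρ⟫ := by
        have : (0 : ℝ) < (n + 1 : ℕ) * ⟪ρ, ρ⟫ := by positivity
        linarith
      by_cases hne : γ = ρ
      · exact ⟨n, by rw [← add_right_cancel_iff (a := ρ), ← succ_nsmul, ← hsum, hne]⟩
      exact ih n n.lt_succ_self hβ (P.sub_mem_of_inner_pos hρ hγ hne hγρ)
        (by rw [← add_sub_assoc, hsum, succ_nsmul, add_sub_cancel_right])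

theorem eq_or_eq_two_nsmul_of_rootReflection_not_mem {ρ β : V} (hρ : IsSimpleRoot Pos ρ)
    (hβ : β ∈ Pos) (hsβ : rootReflection ρ β ∉ Pos) : β = ρ ∨ β = 2 • ρ := by
  have hR := P.isRootSystem
  have hρΦ := P.subset hρ.1
  obtain ⟨c, hc⟩ := hR.exists_int_inner_coroot hρΦ (P.subset hβ)
  have hγ : c • ρ - β ∈ Pos := by
    have := (P.mem_or_neg_mem (hR.rootReflection_mem hρΦ (P.subset hβ))).resolve_left hsβ
    rwa [rootReflection_apply, hc, neg_sub, Int.cast_smul_eq_zsmul] at this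
  have hc0 : 0 ≤ c := by
    have h := P.apply_pos hγ
    rw [map_sub, map_zsmul, zsmul_eq_mul] at h
    have : (0 : ℝ) < c := pos_of_mul_pos_left (by linarith [P.apply_pos hβ])
      (P.apply_pos hρ.1).le
    exact_mod_cast this.le
  lift c to ℕ using hc0
  obtain ⟨j, rfl⟩ := P.exists_eq_nsmul_of_add_eq_nsmul hρ c hβ hγ
    (by rw [add_sub_cancel, natCast_zsmul])
  have hj : 1 ≤ j := Nat.one_le_iff_ne_zero.mpr fun h =>
    hR.nonzero (by simpa [h] using P.subset hβ)
  have := hR.le_two_of_nsmul_mem hρΦ hj (P.subset hβ)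
  interval_cases j <;> simp

theorem apply_le_of_rootLE {α γ : V} (h : RootLE Pos α γ) : f α ≤ f γ :=
  f.apply_le_of_rootLE (fun _ hβ => (P.apply_pos hβ).le) h

theorem apply_lt_highest (hθ : IsHighestRoot Φ Pos θ) {α : V} (hα : α ∈ Pos) (hne : α ≠ θ) :
    f α < f θ := by
  obtain ⟨k, g, hg, hsum⟩ := hθ.2 α (P.subset hα)
  rcases k.eq_zero_or_pos with rfl | hk
  · exact absurd (sub_eq_zero.mp (by simpa using hsum.symm)).symm hne
  have : 0 < f (θ - α) := by
    rw [← hsum, map_sum]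
    have : Nonempty (Fin k) := Fin.pos_iff_nonempty.mp hk
    exact Finset.sum_pos (fun i _ => P.apply_pos (hg i)) Finset.univ_nonempty
  linarith [map_sub f θ α]

theorem inner_highest_nonneg (hθ : IsHighestRoot Φ Pos θ) {β : V} (hβ : β ∈ Pos) :
    0 ≤ ⟪β, θ⟫ := by
  by_contra! h
  have hfβ := P.apply_pos hβ
  have hfθ := P.apply_pos hθ.1
  have hmem := P.isRootSystem.add_mem_of_inner_neg (P.subset hβ) (P.subset hθ.1) h
    (P.add_ne_zero hβ hθ.1)
  linarith [P.apply_le_of_rootLE (hθ.2 _ hmem), map_add f β θ]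

/-- A Cartan integer `c = ⟪α, θ∨⟫ ≥ 2` is impossible: `c θ - α` would be a positive root
with `f (c θ - α) > f θ`. -/
theorem inner_coroot_highest (hθ : IsHighestRoot Φ Pos θ) {α : V} (hα : α ∈ Pos) (hne : α ≠ θ) :
    ⟪α, coroot θ⟫ = 0 ∨ ⟪α, coroot θ⟫ = 1 := by
  have hR := P.isRootSystem
  have hθΦ := P.subset hθ.1
  obtain ⟨c, hc⟩ := hR.exists_int_inner_coroot hθΦ (P.subset hα)
  have hc0 : (0 : ℝ) ≤ c := by
    rw [← hc, inner_coroot]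
    exact div_nonneg (by linarith [P.inner_highest_nonneg hθ hα]) (hR.inner_self_pos hθΦ).le
  suffices c < 2 by
    rw [hc]
    have : 0 ≤ c := by exact_mod_cast hc0
    interval_cases c <;> simp
  by_contra! hc2
  have hc2' : (2 : ℝ) ≤ c := by exact_mod_cast hc2
  have hlt := P.apply_lt_highest hθ hα hne
  have hfα := P.apply_pos hα
  have hrefl := hR.rootReflection_mem hθΦ (P.subset hα)
  rw [rootReflection_apply, hc] at hrefl
  rcases P.mem_or_neg_mem hrefl with h | h
  · have := P.apply_pos h
    rw [map_sub, map_smul, smul_eq_mul] at this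
    nlinarith
  · have := P.apply_le_of_rootLE (hθ.2 _ (P.subset h))
    rw [map_neg, map_sub, map_smul, smul_eq_mul] at this
    nlinarith

theorem highest_sub_mem (hθ : IsHighestRoot Φ Pos θ) {α : V} (hα : α ∈ Pos) (hne : α ≠ θ)
    (h1 : ⟪α, coroot θ⟫ = 1) : θ - α ∈ Pos := by
  have hrefl := P.isRootSystem.rootReflection_mem (P.subset hθ.1) (P.subset hα)
  rw [rootReflection_apply, h1, one_smul] at hrefl
  refine (P.mem_or_neg_mem hrefl).elim (fun h => ?_) (by rw [neg_sub]; exact id)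
  linarith [P.apply_pos h, map_sub f α θ, P.apply_lt_highest hθ hα hne]

theorem exists_add_mem_of_ne_highest (hθ : IsHighestRoot Φ Pos θ) {α : V} (hα : α ∈ Pos)
    (hne : α ≠ θ) : ∃ β ∈ Pos, α + β ∈ Pos := by
  have hR := P.isRootSystem
  by_cases hθα : ⟪α, coroot θ⟫ = 1
  · exact ⟨θ - α, P.highest_sub_mem hθ hα hne hθα, by rw [add_sub_cancel]; exact hθ.1⟩
  obtain ⟨k, g, hg, hsum⟩ := hθ.2 α (P.subset hα)
  have hαθ : ⟪α, θ⟫ = 0 := by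
    have h0 := (P.inner_coroot_highest hθ hα hne).resolve_right hθα
    rw [inner_coroot, div_eq_zero_iff, mul_eq_zero] at h0
    simpa [hR.ne_zero (P.subset hθ.1)] using h0
  have hneg : ∑ i, ⟪g i, α⟫ < ∑ _i : Fin k, (0 : ℝ) := by
    rw [← sum_inner, hsum, inner_sub_left, real_inner_comm, hαθ, Finset.sum_const_zero]
    linarith [hR.inner_self_pos (P.subset hα)]
  obtain ⟨j, -, hj⟩ := Finset.exists_lt_of_sum_lt hneg
  refine ⟨g j, hg j, P.add_mem hα (hg j) ?_⟩
  exact hR.add_mem_of_inner_neg (P.subset hα) (P.subset (hg j)) (by rwa [real_inner_comm])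
    (P.add_ne_zero hα (hg j))

theorem induction_on_highest (hθ : IsHighestRoot Φ Pos θ) {p : V → Prop} (highest : p θ)
    (sub : ∀ α ∈ Pos, ∀ β ∈ Pos, α + β ∈ Pos → p (α + β) → p α) {α : V} (hα : α ∈ Pos) :
    p α := by
  refine (P.finite.wellFoundedOn (r := f ⁻¹'o (· > ·))).induction hα fun α hα ih => ?_
  by_cases hne : α = θ
  · exact hne ▸ highest
  obtain ⟨β, hβ, hαβ⟩ := P.exists_add_mem_of_ne_highest hθ hα hne
  refine sub α hα β hβ hαβ (ih _ hαβ ?_)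
  show f α < f (α + β)
  linarith [map_add f α β, P.apply_pos hβ]

end IsPositiveSystemWith

def ShiInequalities (S : Set V) (kk : V → ℤ) : Prop :=
  ∀ α ∈ S, ∀ β ∈ S, α + β ∈ S → kk α + kk β ≤ kk (α + β) ∧ kk (α + β) ≤ kk α + kk β + 1

/-- `k(-α, w) = -k(α, w) - 1`, since `w(A)` lies between `H_{-α,-k-1}` and `H_{-α,-k}`. -/
noncomputable def extendK (Pos : Set V) (kk : V → ℤ) (x : V) : ℤ :=
  if x ∈ Pos then kk x else -kk (-x) - 1

noncomputable def cartanInt (β α : V) : ℤ := ⌊⟪β, coroot α⟫⌋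

/-- The reflection in the hyperplane `H_{ρ,m}`. -/
noncomputable def affineReflection (ρ : V) (m : ℤ) : V ≃ᵃ[ℝ] V :=
  AffineEquiv.constVAdd ℝ V (m • coroot ρ) * rootReflectionAff ρ

/-- The `k`-vector of `affineReflection ρ m * w` when `kk` is that of `w`:
`k(β, s_{ρ,m} w) = k(s_ρ β, w) + m ⟪β, ρ∨⟫`. -/
noncomputable def reflectK (Pos : Set V) (ρ : V) (m : ℤ) (kk : V → ℤ) (β : V) : ℤ :=
  extendK Pos kk (rootReflection ρ β) + m * cartanInt β ρ

theorem cartanInt_eq_of_inner_coroot_eq {α β : V} {n : ℤ} (h : ⟪β, coroot α⟫ = n) :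
    cartanInt β α = n := by
  rw [cartanInt, h, Int.floor_intCast]

theorem IsRootSystem.cast_cartanInt {Φ : Set V} (hΦ : IsRootSystem Φ) {α β : V} (hα : α ∈ Φ)
    (hβ : β ∈ Φ) : (cartanInt β α : ℝ) = ⟪β, coroot α⟫ := by
  obtain ⟨n, hn⟩ := hΦ.exists_int_inner_coroot hα hβ
  rw [cartanInt, hn, Int.floor_intCast]

theorem affineReflection_apply (ρ : V) (m : ℤ) (v : V) :
    affineReflection ρ m v = rootReflection ρ v + m • coroot ρ :=
  add_comm _ _

theorem affineReflection_mem {Φ : Set V} {ρ : V} (hρ : ρ ∈ Φ) (m : ℤ) :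
    affineReflection ρ m ∈ affineWeylGroup Φ := by
  have hmρ : m • coroot ρ ∈ corootLattice Φ :=
    zsmul_mem (AddSubgroup.subset_closure (show coroot ρ ∈ {v | ∃ α ∈ Φ, v = coroot α} from
      ⟨ρ, hρ, rfl⟩)) m
  exact mul_mem (Subgroup.subset_closure (Set.mem_union_right _ ⟨_, hmρ, rfl⟩))
    (Subgroup.subset_closure (Set.mem_union_left _ ⟨ρ, hρ, rfl⟩))

omit [InnerProductSpace ℝ V] in
theorem extendK_of_mem {Pos : Set V} {kk : V → ℤ} {x : V} (hx : x ∈ Pos) :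
    extendK Pos kk x = kk x :=
  if_pos hx

namespace IsPositiveSystemWith

variable {Φ Pos : Set V} {f : V →ₗ[ℝ] ℝ} (P : IsPositiveSystemWith Φ Pos f) {kk : V → ℤ}
include P

theorem extendK_of_neg_mem {x : V} (hx : -x ∈ Pos) : extendK Pos kk x = -kk (-x) - 1 :=
  if_neg (P.not_mem_of_neg_mem hx)

theorem extendK_neg {x : V} (hx : x ∈ Φ) : extendK Pos kk (-x) = -extendK Pos kk x - 1 := by
  rcases P.mem_or_neg_mem hx with h | h
  · rw [P.extendK_of_neg_mem (by rwa [neg_neg]), neg_neg, extendK_of_mem h]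
  · rw [extendK_of_mem h, P.extendK_of_neg_mem h]
    ring

theorem extendK_reflectK {ρ γ : V} (hρ : ρ ∈ Φ) (hγ : γ ∈ Φ) (m : ℤ) :
    extendK Pos (reflectK Pos ρ m kk) γ =
      extendK Pos kk (rootReflection ρ γ) + m * cartanInt γ ρ := by
  have hR := P.isRootSystem
  by_cases h : γ ∈ Pos
  · rw [extendK, if_pos h, reflectK]
  have hcast : cartanInt (-γ) ρ = -cartanInt γ ρ := by
    rw [cartanInt, inner_neg_left, ← hR.cast_cartanInt hρ hγ, ← Int.cast_neg, Int.floor_intCast]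
  rw [extendK, if_neg h, reflectK, map_neg, P.extendK_neg (hR.rootReflection_mem hρ hγ), hcast]
  ring

end IsPositiveSystemWith

namespace ShiInequalities

variable {Φ Pos : Set V} {f : V →ₗ[ℝ] ℝ} {kk : V → ℤ}

/-- In each sign pattern of `x`, `y`, `x + y`, two of `±x`, `±y`, `±(x + y)` are positive roots
summing to the third. -/
theorem extendK (hk : ShiInequalities Pos kk) (P : IsPositiveSystemWith Φ Pos f) :
    ShiInequalities Φ (extendK Pos kk) := by
  have key : ∀ a ∈ Pos, ∀ b ∈ Pos, ∀ c ∈ Pos, a + b = c →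
      kk a + kk b ≤ kk c ∧ kk c ≤ kk a + kk b + 1 := by
    rintro a ha b hb _ hc rfl
    exact hk a ha b hb hc
  intro x hx y hy hxy
  rcases P.mem_or_neg_mem hx with hx' | hx' <;> rcases P.mem_or_neg_mem hy with hy' | hy' <;>
    rcases P.mem_or_neg_mem hxy with hz | hz
  · rw [extendK_of_mem hx', extendK_of_mem hy', extendK_of_mem hz]
    exact key x hx' y hy' _ hz rfl
  · exact absurd (P.add_mem hx' hy' hxy) (P.not_mem_of_neg_mem hz)
  · have := key _ hz _ hy' x hx' (by abel)
    rw [extendK_of_mem hx', P.extendK_of_neg_mem hy', extendK_of_mem hz]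
    omega
  · have := key x hx' _ hz _ hy' (by abel)
    rw [extendK_of_mem hx', P.extendK_of_neg_mem hy', P.extendK_of_neg_mem hz]
    omega
  · have := key _ hz _ hx' y hy' (by abel)
    rw [P.extendK_of_neg_mem hx', extendK_of_mem hy', extendK_of_mem hz]
    omega
  · have := key y hy' _ hz _ hx' (by abel)
    rw [P.extendK_of_neg_mem hx', extendK_of_mem hy', P.extendK_of_neg_mem hz]
    omega
  · refine absurd (P.add_mem hx' hy' ?_) (by rw [← neg_add]; exact P.neg_not_mem hz)
    rw [← neg_add]
    exact P.isRootSystem.neg_mem hxy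
  · have := key _ hx' _ hy' _ hz (by abel)
    rw [P.extendK_of_neg_mem hx', P.extendK_of_neg_mem hy', P.extendK_of_neg_mem hz]
    omega

theorem reflectK (hk : ShiInequalities Pos kk) (P : IsPositiveSystemWith Φ Pos f) {ρ : V}
    (hρ : ρ ∈ Φ) (m : ℤ) : ShiInequalities Pos (reflectK Pos ρ m kk) := by
  intro α hα β hβ hαβ
  have hR := P.isRootSystem
  have hs := hk.extendK P _ (hR.rootReflection_mem hρ (P.subset hα)) _
    (hR.rootReflection_mem hρ (P.subset hβ))
    (by rw [← map_add]; exact hR.rootReflection_mem hρ (P.subset hαβ))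
  have hc : cartanInt (α + β) ρ = cartanInt α ρ + cartanInt β ρ := by
    have := inner_add_left (𝕜 := ℝ) α β (coroot ρ)
    rw [← hR.cast_cartanInt hρ (P.subset hα), ← hR.cast_cartanInt hρ (P.subset hβ),
      ← hR.cast_cartanInt hρ (P.subset hαβ)] at this
    exact_mod_cast this
  simp only [_root_.reflectK, map_add, hc, mul_add]
  constructor <;> linarith [hs.1, hs.2]

end ShiInequalities

theorem ShiInequalities.of_isAlcoveK {Pos : Set V} {θ : V} {w : V ≃ᵃ[ℝ] V} {kk : V → ℤ}
    (hA : (fundamentalAlcove Pos θ).Nonempty) (hw : IsAlcoveK Pos θ w kk) :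
    ShiInequalities Pos kk := by
  obtain ⟨v, hv⟩ := hA
  intro α hα β hβ hαβ
  have hα' := hw α hα v hv
  have hβ' := hw β hβ v hv
  have hαβ' := hw _ hαβ v hv
  rw [inner_add_left] at hαβ'
  have h1 : kk α + kk β < kk (α + β) + 1 := by
    exact_mod_cast (show (kk α + kk β : ℝ) < kk (α + β) + 1 by linarith)
  have h2 : kk (α + β) < kk α + kk β + 2 := by
    exact_mod_cast (show (kk (α + β) : ℝ) < kk α + kk β + 2 by linarith)
  omega

namespace IsAlcoveK

variable {Φ Pos : Set V} {f : V →ₗ[ℝ] ℝ} {θ : V} {w : V ≃ᵃ[ℝ] V} {kk : V → ℤ}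

theorem extendK (hw : IsAlcoveK Pos θ w kk) (P : IsPositiveSystemWith Φ Pos f) {γ : V}
    (hγ : γ ∈ Φ) {v : V} (hv : v ∈ fundamentalAlcove Pos θ) :
    (extendK Pos kk γ : ℝ) < ⟪γ, w v⟫ ∧ ⟪γ, w v⟫ < extendK Pos kk γ + 1 := by
  rcases P.mem_or_neg_mem hγ with h | h
  · rw [extendK_of_mem h]
    exact hw γ h v hv
  · have := hw _ h v hv
    rw [inner_neg_left] at this
    rw [P.extendK_of_neg_mem h]
    push_cast
    constructor <;> linarith [this.1, this.2]

theorem affineReflection_mul {ρ : V} {m : ℤ} (hw : IsAlcoveK Pos θ w (reflectK Pos ρ m kk))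
    (P : IsPositiveSystemWith Φ Pos f) (hρ : ρ ∈ Φ) :
    IsAlcoveK Pos θ (affineReflection ρ m * w) kk := by
  have hR := P.isRootSystem
  intro α hα v hv
  have hsα := hR.rootReflection_mem hρ (P.subset hα)
  have hb := hw.extendK P hsα hv
  rw [P.extendK_reflectK hρ hsα, rootReflection_rootReflection, extendK_of_mem hα] at hb
  have hc : (cartanInt (rootReflection ρ α) ρ : ℝ) = -cartanInt α ρ := by
    rw [hR.cast_cartanInt hρ hsα, hR.cast_cartanInt hρ (P.subset hα), inner_coroot_rootReflection]
  have happ :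
      ⟪α, (affineReflection ρ m * w) v⟫ = ⟪rootReflection ρ α, w v⟫ + m * cartanInt α ρ := by
    rw [AffineEquiv.coe_mul, Function.comp_apply, affineReflection_apply, inner_add_right,
      inner_rootReflection_left, ← Int.cast_smul_eq_zsmul ℝ, real_inner_smul_right,
      hR.cast_cartanInt hρ (P.subset hα)]
  push_cast at hb
  rw [hc, happ] at *
  constructor <;> linarith [hb.1, hb.2]

end IsAlcoveK

namespace IsPositiveSystemWith

variable {Φ Pos : Set V} {f : V →ₗ[ℝ] ℝ} (P : IsPositiveSystemWith Φ Pos f) {θ : V}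
include P

theorem inner_pos_of_mem_fundamentalAlcove {v : V} (hv : v ∈ fundamentalAlcove Pos θ) {α : V}
    (hα : α ∈ Pos) : 0 < ⟪α, v⟫ :=
  P.induction_on_simple hv.1 (fun β _ γ _ _ hβ hγ => by rw [inner_add_left]; positivity) hα

theorem inner_lt_one_of_mem_fundamentalAlcove (hθ : IsHighestRoot Φ Pos θ) {v : V}
    (hv : v ∈ fundamentalAlcove Pos θ) {α : V} (hα : α ∈ Pos) : ⟪α, v⟫ < 1 := by
  have := (innerₛₗ ℝ v).apply_le_of_rootLE
    (fun β hβ => (real_inner_comm v β ▸ P.inner_pos_of_mem_fundamentalAlcove hv hβ).le)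
    (hθ.2 α (P.subset hα))
  simp only [innerₛₗ_apply_apply] at this
  linarith [hv.2, real_inner_comm v α, real_inner_comm v θ]

theorem isAlcoveK_one (hθ : IsHighestRoot Φ Pos θ) {kk : V → ℤ} (hk : ∀ α ∈ Pos, kk α = 0) :
    IsAlcoveK Pos θ 1 kk := fun α hα v hv => by
  rw [hk α hα, AffineEquiv.coe_one, id, Int.cast_zero, zero_add]
  exact ⟨P.inner_pos_of_mem_fundamentalAlcove hv hα,
    P.inner_lt_one_of_mem_fundamentalAlcove hθ hv hα⟩

end IsPositiveSystemWith

namespace ShiInequalities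

variable {Φ Pos : Set V} {f : V →ₗ[ℝ] ℝ} {θ : V} {kk : V → ℤ}

theorem nonneg_of_simple (hk : ShiInequalities Pos kk) (P : IsPositiveSystemWith Φ Pos f)
    (hs : ∀ ρ, IsSimpleRoot Pos ρ → 0 ≤ kk ρ) {α : V} (hα : α ∈ Pos) : 0 ≤ kk α :=
  P.induction_on_simple hs (fun β hβ γ hγ hβγ h1 h2 => by linarith [(hk β hβ γ hγ hβγ).1]) hα

theorem le_highest (hk : ShiInequalities Pos kk) (P : IsPositiveSystemWith Φ Pos f)
    (hθ : IsHighestRoot Φ Pos θ) (hdom : ∀ α ∈ Pos, 0 ≤ kk α) {α : V} (hα : α ∈ Pos) :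
    kk α ≤ kk θ :=
  P.induction_on_highest (p := fun α => kk α ≤ kk θ) hθ le_rfl
    (fun α hα β hβ hαβ h => by linarith [(hk α hα β hβ hαβ).1, hdom β hβ]) hα

end ShiInequalities

namespace IsPositiveSystemWith

variable {Φ Pos : Set V} {f : V →ₗ[ℝ] ℝ} (P : IsPositiveSystemWith Φ Pos f) {θ : V} {kk : V → ℤ}
include P

/-- `β ↦ ±s_ρ β` is an involution of `Pos` fixing `ρ`. -/
theorem sum_natAbs_reflectK_lt {ρ : V} (hρ : ρ ∈ Pos) {m : ℤ}
    (hle : ∀ β ∈ Pos,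
      (reflectK Pos ρ m kk β).natAbs ≤ (kk (posRep Pos (rootReflection ρ β))).natAbs)
    (hlt : (reflectK Pos ρ m kk ρ).natAbs < (kk ρ).natAbs) :
    ∑ β ∈ P.finite.toFinset, (reflectK Pos ρ m kk β).natAbs <
      ∑ β ∈ P.finite.toFinset, (kk β).natAbs := by
  refine Finset.sum_lt_sum_of_le_comp_involutive (fun β => posRep Pos (rootReflection ρ β))
    (fun β hβ => ?_) (fun β hβ => ?_) (fun β hβ => hle β (by simpa using hβ)) ?_
  · simpa using P.posRep_mem
      (P.isRootSystem.rootReflection_mem (P.subset hρ) (P.subset (by simpa using hβ)))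
  · exact P.posRep_rootReflection_posRep_rootReflection ρ (by simpa using hβ)
  · refine ⟨ρ, by simpa using hρ, ?_⟩
    rwa [rootReflection_self, P.posRep_neg (P.subset hρ), posRep, if_pos hρ]

theorem sum_natAbs_reflectK_simple_lt {ρ : V} (hρ : IsSimpleRoot Pos ρ)
    (hk : ShiInequalities Pos kk) (hkρ : kk ρ < 0) :
    ∑ β ∈ P.finite.toFinset, (reflectK Pos ρ 0 kk β).natAbs <
      ∑ β ∈ P.finite.toFinset, (kk β).natAbs := by
  have hneg : ∀ β ∈ Pos, rootReflection ρ β ∉ Pos → rootReflection ρ β = -β ∧ kk β < 0 := by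
    intro β hβ hsβ
    rcases P.eq_or_eq_two_nsmul_of_rootReflection_not_mem hρ hβ hsβ with h | h <;> rw [h]
    · exact ⟨rootReflection_self ρ, hkρ⟩
    · refine ⟨by rw [map_nsmul, rootReflection_self, smul_neg], ?_⟩
      rw [h, two_nsmul] at hβ
      rw [two_nsmul]
      linarith [(hk ρ hρ.1 ρ hρ.1 hβ).2]
  have hterm : ∀ β ∈ Pos, rootReflection ρ β ∉ Pos →
      (reflectK Pos ρ 0 kk β).natAbs < (kk (posRep Pos (rootReflection ρ β))).natAbs := by
    intro β hβ hsβ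
    obtain ⟨hs, hkβ⟩ := hneg β hβ hsβ
    rw [reflectK, zero_mul, add_zero, posRep, if_neg hsβ, hs, neg_neg,
      P.extendK_of_neg_mem (by rwa [neg_neg]), neg_neg]
    omega
  refine P.sum_natAbs_reflectK_lt hρ.1 (fun β hβ => ?_) ?_
  · by_cases hsβ : rootReflection ρ β ∈ Pos
    · rw [reflectK, zero_mul, add_zero, posRep, if_pos hsβ, extendK_of_mem hsβ]
    · exact (hterm β hβ hsβ).le
  · have := hterm ρ hρ.1 (by rw [rootReflection_self]; exact P.neg_not_mem hρ.1)
    rwa [rootReflection_self, P.posRep_neg (P.subset hρ.1), posRep, if_pos hρ.1] at this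

theorem sum_natAbs_reflectK_highest_lt (hθ : IsHighestRoot Φ Pos θ) (hkθ : 0 < kk θ) :
    ∑ β ∈ P.finite.toFinset, (reflectK Pos θ 1 kk β).natAbs <
      ∑ β ∈ P.finite.toFinset, (kk β).natAbs := by
  have hθΦ := P.subset hθ.1
  have hθθ : reflectK Pos θ 1 kk θ = 1 - kk θ := by
    have : cartanInt θ θ = 2 := cartanInt_eq_of_inner_coroot_eq <| by
      rw [inner_coroot, div_eq_iff (P.isRootSystem.inner_self_pos hθΦ).ne']
      push_cast; ring
    rw [reflectK, rootReflection_self, P.extendK_of_neg_mem (by rw [neg_neg]; exact hθ.1),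
      neg_neg, this]
    ring
  refine P.sum_natAbs_reflectK_lt hθ.1 (fun β hβ => ?_) (by rw [hθθ]; omega)
  by_cases hne : β = θ
  · subst hne
    rw [hθθ, rootReflection_self, P.posRep_neg hθΦ, posRep, if_pos hθ.1]
    omega
  rcases P.inner_coroot_highest hθ hβ hne with h0 | h1
  · have hs : rootReflection θ β = β := by rw [rootReflection_apply, h0, zero_smul, sub_zero]
    rw [reflectK, hs, cartanInt_eq_of_inner_coroot_eq (n := 0) (by simpa using h0), posRep,
      if_pos hβ, extendK_of_mem hβ, mul_zero, add_zero]
  · have hs : rootReflection θ β = -(θ - β) := by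
      rw [rootReflection_apply, h1, one_smul, neg_sub]
    have hθβ := P.highest_sub_mem hθ hβ hne h1
    rw [reflectK, hs, cartanInt_eq_of_inner_coroot_eq (n := 1) (by simpa using h1),
      P.posRep_neg (P.subset hθβ), posRep, if_pos hθβ, P.extendK_of_neg_mem (by rwa [neg_neg]),
      neg_neg]
    omega

theorem exists_mem_affineWeylGroup_isAlcoveK (hθ : IsHighestRoot Φ Pos θ)
    (hk : ShiInequalities Pos kk) : ∃ w ∈ affineWeylGroup Φ, IsAlcoveK Pos θ w kk := by
  induction hn : ∑ β ∈ P.finite.toFinset, (kk β).natAbs using Nat.strong_induction_on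
    generalizing kk with
  | _ n ih =>
  by_cases hneg : ∃ ρ, IsSimpleRoot Pos ρ ∧ kk ρ < 0
  · obtain ⟨ρ, hρ, hkρ⟩ := hneg
    obtain ⟨w, hw, hwk⟩ := ih _ (hn ▸ P.sum_natAbs_reflectK_simple_lt hρ hk hkρ)
      (hk.reflectK P (P.subset hρ.1) 0) rfl
    exact ⟨_, mul_mem (affineReflection_mem (P.subset hρ.1) 0) hw,
      hwk.affineReflection_mul P (P.subset hρ.1)⟩
  push Not at hneg
  have hdom : ∀ α ∈ Pos, 0 ≤ kk α := fun α hα => hk.nonneg_of_simple P hneg hα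
  rcases (hdom θ hθ.1).eq_or_lt with h0 | hpos
  · exact ⟨1, one_mem _, P.isAlcoveK_one hθ fun α hα =>
      le_antisymm (h0 ▸ hk.le_highest P hθ hdom hα) (hdom α hα)⟩
  · obtain ⟨w, hw, hwk⟩ := ih _ (hn ▸ P.sum_natAbs_reflectK_highest_lt hθ hpos)
      (hk.reflectK P (P.subset hθ.1) 1) rfl
    exact ⟨_, mul_mem (affineReflection_mem (P.subset hθ.1) 1) hw,
      hwk.affineReflection_mul P (P.subset hθ.1)⟩

end IsPositiveSystemWith

end

theorem fundamentalAlcove_nonempty (f : V →ₗ[ℝ] ℝ) {Pos : Set V} {θ : V}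
    (hf : ∀ α ∈ Pos, 0 < f α) (hθ : θ ∈ Pos) : (fundamentalAlcove Pos θ).Nonempty := by
  set u := (InnerProductSpace.toDual ℝ V).symm (LinearMap.toContinuousLinearMap f)
  have hu : ∀ x, ⟪x, (2 * f θ)⁻¹ • u⟫ = (2 * f θ)⁻¹ * f x := fun x => by
    rw [real_inner_smul_right, real_inner_comm, InnerProductSpace.toDual_symm_apply]
    rfl
  have hfθ := hf θ hθ
  refine ⟨(2 * f θ)⁻¹ • u, fun α hα => ?_, ?_⟩
  · rw [hu]
    exact mul_pos (by positivity) (hf α hα.1)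
  · rw [hu, mul_comm, mul_inv_lt_iff₀ (by positivity)]
    linarith

theorem shi_alcove_characterization_general (Φ Pos : Set V) (hΦ : IsRootSystem Φ)
    (hPos : IsPositiveSystem Φ Pos)
    (θ : V) (hθ : θ ∈ Pos ∧ ∀ α ∈ Φ, RootLE Pos α θ)
    (kk : V → ℤ) :
    (∃ w ∈ affineWeylGroup Φ, IsAlcoveK Pos θ w kk) ↔
      ∀ α ∈ Pos, ∀ β ∈ Pos, α + β ∈ Pos →
        kk α + kk β ≤ kk (α + β) ∧ kk (α + β) ≤ kk α + kk β + 1 := by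
  obtain ⟨f, hf, hPosEq⟩ := hPos
  have P : IsPositiveSystemWith Φ Pos f := ⟨hΦ, hf, hPosEq⟩
  refine ⟨fun ⟨w, _, hw⟩ => ?_, P.exists_mem_affineWeylGroup_isAlcoveK hθ⟩
  exact ShiInequalities.of_isAlcoveK (fundamentalAlcove_nonempty f (fun _ => P.apply_pos) hθ.1) hw

/-- (Shi) Given integers `k_α` for `α ∈ Φ⁺`, there exists `w ∈ W_a` with
`k(α, w) = k_α` for all `α` iff `k_α + k_β ≤ k_{α+β} ≤ k_α + k_β + 1` whenever
`α, β, α + β ∈ Φ⁺`. -/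
theorem shi_alcove_characterization (Φ Pos : Set V) (hΦ : IsRootSystem Φ)
    (hirr : IsIrreducibleRootSystem Φ) (hPos : IsPositiveSystem Φ Pos)
    (θ : V) (hθ : θ ∈ Pos ∧ ∀ α ∈ Φ, RootLE Pos α θ)
    (kk : V → ℤ) :
    (∃ w ∈ affineWeylGroup Φ, IsAlcoveK Pos θ w kk) ↔
      ∀ α ∈ Pos, ∀ β ∈ Pos, α + β ∈ Pos →
        kk α + kk β ≤ kk (α + β) ∧ kk (α + β) ≤ kk α + kk β + 1 :=
  shi_alcove_characterization_general Φ Pos hΦ hPos θ hθ kk
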